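/- For each unlabelled binary tree T with n nodes, the set of permutations σ ∈ S_n whose binary search tree ABR(σ) has shape T equals the set of linear extensions of T viewed as a poset (via its standard binary search tree labelling), and this set is an interval of the right weak order on S_n. -/

import Mathlib

/-- Unlabelled binary trees. -/
inductive Tree0 where
  | leaf : Tree0
  | node : Tree0 → Tree0 → Tree0
deriving DecidableEq

/-- Labelled binary trees (labels in `ℕ`). -/
inductive BT where
  | leaf : BT
  | node : BT → ℕ → BT → BT
deriving DecidableEq

namespace BT

/-- Binary search tree insertion: `k` goes left if `≤` the root, right if `>`. -/
def bstInsert (k : ℕ) : BT → BT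
  | leaf => node leaf k leaf
  | node l x r => if k ≤ x then node (bstInsert k l) x r else node l x (bstInsert k r)

/-- Insert the letters of a word from right to left into an empty BST. -/
def abr (w : List ℕ) : BT := w.foldr bstInsert leaf

/-- Underlying unlabelled shape. -/
def shape : BT → Tree0
  | leaf => Tree0.leaf
  | node l _ r => Tree0.node (shape l) (shape r)

/-- Inorder list of labels. -/
def labels : BT → List ℕ
  | leaf => []
  | node l x r => labels l ++ x :: labels r

/-- The binary search tree property with distinct labels: every node label exceeds all
labels in its left subtree and is less than all labels in its right subtree. -/
def IsBST : BT → Prop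
  | leaf => True
  | node l x r => (∀ y ∈ labels l, y < x) ∧ (∀ y ∈ labels r, x < y) ∧ IsBST l ∧ IsBST r

/-- `a` lies (weakly) below `b` in the tree-as-poset: `a` is in the subtree rooted at
the node labelled `b`. -/
def Desc : BT → ℕ → ℕ → Prop
  | leaf, _, _ => False
  | node l x r, a, b =>
      (b = x ∧ (a = x ∨ a ∈ labels l ∨ a ∈ labels r)) ∨ Desc l a b ∨ Desc r a b

end BT

/-- The word of values of a permutation of `{1,…,n}`. -/
def wordOf {n : ℕ} (σ : Equiv.Perm (Fin n)) : List ℕ :=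
  List.ofFn fun i => (σ i : ℕ) + 1

/-- `σ` is a linear extension of the labelled tree `t`: strict descendants appear
before their ancestors in the word of `σ`. -/
def IsLinExt (t : BT) {n : ℕ} (σ : Equiv.Perm (Fin n)) : Prop :=
  ∀ a b : ℕ, BT.Desc t a b → a ≠ b →
    (wordOf σ).idxOf a < (wordOf σ).idxOf b

/-- Coinversions of a permutation: pairs of values `(x,y)`, `x < y`, with `y` appearing
before `x`. The right weak order is containment of coinversion sets. -/
def coinvSet {n : ℕ} (σ : Equiv.Perm (Fin n)) : Set (Fin n × Fin n) :=
  {p | p.1 < p.2 ∧ σ⁻¹ p.2 < σ⁻¹ p.1}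

/-!
Inserting a word from right to left, its last letter becomes the root of `abr w` and the
earlier letters are inserted, in their order, into the two subtrees according to their
comparison with that root. Hence, for a word `w` on the labels of a binary search tree `t`,
`abr w = t` holds exactly when no letter of `w` is followed by one of its strict descendants
in `t`; and as a binary search tree is determined by its shape and its labels, this is the
same as `abr w` having the shape of `t`.

The postorder (left, right, root) and its mirror (right, left, root) are linear extensions of
`t` that list incomparable labels in increasing, resp. decreasing, order. So the coinversions
of the first are exactly the pairs the tree forces into coinversion, and those of the second
are all pairs the tree does not forbid: they are the bottom and the top of the class.
-/

namespace List

variable {α : Type*}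

theorem pairwise_iff_pairwise_filter_and_filter_not {R : α → α → Prop} (P : α → Prop)
    [DecidablePred P] {l : List α} (hcross : ∀ a ∈ l, ∀ b ∈ l, (P a ↔ ¬ P b) → R a b) :
    l.Pairwise R ↔ (l.filter (P ·)).Pairwise R ∧ (l.filter (¬ P ·)).Pairwise R := by
  induction l with
  | nil => simp
  | cons a l ih =>
    have ih := ih fun b hb c hc => hcross b (mem_cons_of_mem a hb) c (mem_cons_of_mem a hc)
    have hR : (∀ b ∈ l, R a b) ↔ ∀ b ∈ l, (P b ↔ P a) → R a b :=
      ⟨fun h b hb _ => h b hb, fun h b hb => by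
        by_cases hab : P b ↔ P a
        · exact h b hb hab
        · exact hcross a mem_cons_self b (mem_cons_of_mem a hb) (by tauto)⟩
    by_cases hPa : P a <;> simp [hPa, ih, hR] <;> tauto

theorem Nodup.forall_idxOf_lt_iff_pairwise [DecidableEq α] {D : α → α → Prop} {w : List α}
    (hw : w.Nodup) (hD : ∀ a b, D a b → a ∈ w ∧ b ∈ w) :
    (∀ a b, D a b → a ≠ b → w.idxOf a < w.idxOf b) ↔ w.Pairwise (fun a b => ¬ D b a) := by
  rw [pairwise_iff_getElem]
  constructor
  · intro h i j hi hj hij hji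
    have hne : w[j] ≠ w[i] := fun e => hij.ne' ((hw.getElem_inj_iff).mp e)
    have := h _ _ hji hne
    rw [hw.idxOf_getElem, hw.idxOf_getElem] at this
    exact lt_asymm hij this
  · intro h a b hab hne
    obtain ⟨ha, hb⟩ := hD a b hab
    refine lt_of_not_ge fun hba => h _ _ (idxOf_lt_length_iff.mpr hb) (idxOf_lt_length_iff.mpr ha)
      (lt_of_le_of_ne hba fun e => hne ((idxOf_inj hb).mp e).symm) ?_
    rwa [getElem_idxOf, getElem_idxOf]

end List

namespace BT

open List

theorem labels_bstInsert_perm (k : ℕ) (s : BT) : labels (bstInsert k s) ~ k :: labels s := by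
  induction s with
  | leaf => rfl
  | node l x r ihl ihr =>
    unfold bstInsert
    split_ifs
    · exact ihl.append_right _
    · calc labels l ++ x :: labels (bstInsert k r) ~ labels l ++ x :: k :: labels r :=
            (ihr.cons x).append_left _
        _ ~ labels l ++ k :: x :: labels r := (Perm.swap k x _).append_left _
        _ ~ k :: (labels l ++ x :: labels r) := perm_middle

theorem labels_abr_perm (w : List ℕ) : labels (abr w) ~ w := by
  induction w with
  | nil => rfl
  | cons a w ih => exact (labels_bstInsert_perm a (abr w)).trans (ih.cons a)

theorem isBST_bstInsert {k : ℕ} {s : BT} (hs : IsBST s) (hk : k ∉ labels s) :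
    IsBST (bstInsert k s) := by
  induction s with
  | leaf => simp [bstInsert, IsBST, labels]
  | node l x r ihl ihr =>
    obtain ⟨hl, hr, hbl, hbr⟩ := hs
    simp only [labels, mem_append, mem_cons, not_or] at hk
    unfold bstInsert
    split_ifs with hkx
    · refine ⟨fun y hy => ?_, hr, ihl hbl hk.1, hbr⟩
      rcases mem_cons.mp ((labels_bstInsert_perm k l).subset hy) with rfl | hy
      exacts [lt_of_le_of_ne hkx hk.2.1, hl y hy]
    · refine ⟨hl, fun y hy => ?_, hbl, ihr hbr hk.2.2⟩
      rcases mem_cons.mp ((labels_bstInsert_perm k r).subset hy) with rfl | hy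
      exacts [not_le.mp hkx, hr y hy]

theorem isBST_abr {w : List ℕ} (hw : w.Nodup) : IsBST (abr w) := by
  induction w with
  | nil => trivial
  | cons a w ih =>
    rw [nodup_cons] at hw
    exact isBST_bstInsert (ih hw.2) fun h => hw.1 ((labels_abr_perm w).subset h)

theorem IsBST.pairwise_labels {s : BT} (hs : IsBST s) : (labels s).Pairwise (· < ·) := by
  induction s with
  | leaf => exact Pairwise.nil
  | node l x r ihl ihr =>
    obtain ⟨hl, hr, hbl, hbr⟩ := hs
    simp only [labels, pairwise_append, pairwise_cons, mem_cons]
    refine ⟨ihl hbl, ⟨hr, ihr hbr⟩, fun a ha b hb => ?_⟩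
    rcases hb with rfl | hb
    exacts [hl a ha, (hl a ha).trans (hr b hb)]

theorem length_labels_eq_of_shape_eq {s t : BT} (h : shape s = shape t) :
    (labels s).length = (labels t).length := by
  induction s generalizing t with
  | leaf => cases t <;> simp_all [shape]
  | node l x r ihl ihr =>
    cases t with
    | leaf => simp [shape] at h
    | node l' y r' =>
      simp only [shape, Tree0.node.injEq] at h
      simp [labels, ihl h.1, ihr h.2]

theorem eq_of_shape_eq_of_labels_eq {s t : BT} (hshape : shape s = shape t)
    (hlabels : labels s = labels t) : s = t := by
  induction s generalizing t with
  | leaf => cases t <;> simp_all [shape]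
  | node l x r ihl ihr =>
    cases t with
    | leaf => simp [shape] at hshape
    | node l' y r' =>
      simp only [shape, Tree0.node.injEq] at hshape
      obtain ⟨hl, hxr⟩ := append_inj hlabels (length_labels_eq_of_shape_eq hshape.1)
      obtain ⟨rfl, hr⟩ := cons_eq_cons.mp hxr
      rw [ihl hshape.1 hl, ihr hshape.2 hr]

theorem IsBST.eq_of_shape_eq {s t : BT} (hs : IsBST s) (ht : IsBST t)
    (hshape : shape s = shape t) (hlabels : labels s ~ labels t) : s = t :=
  eq_of_shape_eq_of_labels_eq hshape (hlabels.eq_of_pairwise' hs.pairwise_labels ht.pairwise_labels)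

theorem shape_abr_eq_iff {w : List ℕ} {t : BT} (hw : w.Nodup) (ht : IsBST t)
    (hwt : w ~ labels t) : shape (abr w) = shape t ↔ abr w = t :=
  ⟨fun h => (isBST_abr hw).eq_of_shape_eq ht h ((labels_abr_perm w).trans hwt),
    fun h => h ▸ rfl⟩

theorem foldr_bstInsert_node (w : List ℕ) (l r : BT) (x : ℕ) :
    w.foldr bstInsert (node l x r) =
      node ((w.filter (· ≤ x)).foldr bstInsert l) x ((w.filter (¬ · ≤ x)).foldr bstInsert r) := by
  induction w with
  | nil => rfl
  | cons a w ih =>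
    rw [foldr_cons, ih, filter_cons, filter_cons]
    by_cases h : a ≤ x <;> simp only [h, bstInsert, decide_true, decide_false, not_true_eq_false,
      not_false_eq_true, if_true, if_false, Bool.false_eq_true, foldr_cons]

theorem abr_append_singleton (w : List ℕ) (x : ℕ) :
    abr (w ++ [x]) = node (abr (w.filter (· ≤ x))) x (abr (w.filter (¬ · ≤ x))) := by
  simp only [abr, foldr_append, foldr_cons, foldr_nil]
  exact foldr_bstInsert_node w leaf leaf x

theorem mem_labels_of_desc {s : BT} {a b : ℕ} (h : Desc s a b) :
    a ∈ labels s ∧ b ∈ labels s := by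
  induction s with
  | leaf => exact h.elim
  | node l x r ihl ihr =>
    rcases h with ⟨rfl, rfl | ha | ha⟩ | h | h
    all_goals simp_all [labels]

section Node

variable {l r : BT} {x : ℕ}

theorem desc_node_iff_left (hbst : IsBST (node l x r)) {a b : ℕ} (hb : b ∈ labels l) :
    Desc (node l x r) a b ↔ Desc l a b := by
  obtain ⟨hl, hr, -⟩ := hbst
  refine ⟨fun h => ?_, fun h => Or.inr (Or.inl h)⟩
  rcases h with ⟨rfl, -⟩ | h | h
  · exact absurd (hl b hb) (lt_irrefl b)
  · exact h
  · exact absurd ((hl b hb).trans (hr b (mem_labels_of_desc h).2)) (lt_irrefl b)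

theorem desc_node_iff_right (hbst : IsBST (node l x r)) {a b : ℕ} (hb : b ∈ labels r) :
    Desc (node l x r) a b ↔ Desc r a b := by
  obtain ⟨hl, hr, -⟩ := hbst
  refine ⟨fun h => ?_, fun h => Or.inr (Or.inr h)⟩
  rcases h with ⟨rfl, -⟩ | h | h
  · exact absurd (hr b hb) (lt_irrefl b)
  · exact absurd ((hl b (mem_labels_of_desc h).2).trans (hr b hb)) (lt_irrefl b)
  · exact h

theorem eq_of_desc_root (hbst : IsBST (node l x r)) {a : ℕ} (h : Desc (node l x r) x a) :
    a = x := by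
  obtain ⟨hl, hr, -⟩ := hbst
  rcases h with ⟨rfl, -⟩ | h | h
  · rfl
  · exact absurd (hl x (mem_labels_of_desc h).1) (lt_irrefl x)
  · exact absurd (hr x (mem_labels_of_desc h).1) (lt_irrefl x)

theorem not_desc_of_mem_left_of_mem_right (hbst : IsBST (node l x r)) {a b : ℕ}
    (ha : a ∈ labels l) (hb : b ∈ labels r) :
    ¬ Desc (node l x r) a b ∧ ¬ Desc (node l x r) b a := by
  rw [desc_node_iff_right hbst hb, desc_node_iff_left hbst ha]
  exact ⟨fun h => absurd ((hbst.1 a ha).trans (hbst.2.1 a (mem_labels_of_desc h).1)) (lt_irrefl a),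
    fun h => absurd ((hbst.1 b (mem_labels_of_desc h).1).trans (hbst.2.1 b hb)) (lt_irrefl b)⟩

theorem filter_perm_labels_of_perm (hbst : IsBST (node l x r)) {w : List ℕ}
    (hw : w ~ labels l ++ labels r) :
    w.filter (· ≤ x) ~ labels l ∧ w.filter (¬ · ≤ x) ~ labels r := by
  have hl : ∀ a ∈ labels l, a ≤ x := fun a ha => (hbst.1 a ha).le
  have hr : ∀ a ∈ labels r, ¬ a ≤ x := fun a ha => not_le.mpr (hbst.2.1 a ha)
  refine ⟨(hw.filter _).trans ?_, (hw.filter _).trans ?_⟩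
  · rw [filter_append, (filter_eq_self (l := labels l)).mpr (by simpa using hl),
      (filter_eq_nil_iff (l := labels r)).mpr (by simpa using hr), append_nil]
  · rw [filter_append, (filter_eq_self (l := labels r)).mpr (by simpa using hr),
      (filter_eq_nil_iff (l := labels l)).mpr (by simpa using hl), nil_append]

theorem pairwise_not_desc_node_iff (ht : IsBST (node l x r)) {w : List ℕ}
    (hw : w ~ labels l ++ labels r) :
    w.Pairwise (fun a b => ¬ Desc (node l x r) b a) ↔
      (w.filter (· ≤ x)).Pairwise (fun a b => ¬ Desc l b a) ∧
        (w.filter (¬ · ≤ x)).Pairwise (fun a b => ¬ Desc r b a) := by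
  obtain ⟨hwl, hwr⟩ := filter_perm_labels_of_perm ht hw
  have hmem : ∀ a ∈ w, (a ≤ x → a ∈ labels l) ∧ (¬ a ≤ x → a ∈ labels r) := fun a ha =>
    ⟨fun h => hwl.subset (mem_filter.mpr ⟨ha, decide_eq_true h⟩),
      fun h => hwr.subset (mem_filter.mpr ⟨ha, decide_eq_true h⟩)⟩
  have hcross : ∀ a ∈ w, ∀ b ∈ w, (a ≤ x ↔ ¬ b ≤ x) → ¬ Desc (node l x r) b a := by
    intro a ha b hb hab
    by_cases hax : a ≤ x
    · exact (not_desc_of_mem_left_of_mem_right ht ((hmem a ha).1 hax)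
        ((hmem b hb).2 (hab.mp hax))).2
    · exact (not_desc_of_mem_left_of_mem_right ht ((hmem b hb).1 (not_not.mp (mt hab.mpr hax)))
        ((hmem a ha).2 hax)).1
  have hleft : (w.filter (· ≤ x)).Pairwise (fun a b => ¬ Desc (node l x r) b a) ↔
      (w.filter (· ≤ x)).Pairwise (fun a b => ¬ Desc l b a) :=
    Pairwise.iff_of_mem fun ha _ => not_congr (desc_node_iff_left ht (hwl.subset ha))
  have hright : (w.filter (¬ · ≤ x)).Pairwise (fun a b => ¬ Desc (node l x r) b a) ↔
      (w.filter (¬ · ≤ x)).Pairwise (fun a b => ¬ Desc r b a) :=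
    Pairwise.iff_of_mem fun ha _ => not_congr (desc_node_iff_right ht (hwr.subset ha))
  rw [pairwise_iff_pairwise_filter_and_filter_not (· ≤ x) hcross, hleft, hright]

end Node

theorem abr_eq_iff_pairwise {w : List ℕ} {t : BT} (hw : w.Nodup) (ht : IsBST t)
    (hwt : w ~ labels t) : abr w = t ↔ w.Pairwise (fun a b => ¬ Desc t b a) := by
  induction t generalizing w with
  | leaf =>
    obtain rfl : w = [] := hwt.eq_nil
    exact iff_of_true rfl Pairwise.nil
  | node l y r ihl ihr =>
    obtain rfl | ⟨w, x, rfl⟩ := w.eq_nil_or_concat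
    · simp [labels] at hwt
    rw [concat_eq_append] at hw hwt ⊢
    rw [abr_append_singleton, pairwise_append]
    simp only [pairwise_singleton, mem_singleton, forall_eq, true_and]
    obtain rfl | hxy := eq_or_ne x y
    swap
    · -- the root `y` occurs before the last letter `x`, which lies below it
      have hy : y ∈ w := by
        simpa [hxy.symm] using hwt.symm.subset (show y ∈ labels (node l y r) by simp [labels])
      have hx : x ∈ labels l ∨ x ∈ labels r := by
        simpa [labels, hxy] using hwt.subset (mem_append_right w (mem_singleton_self x))
      exact iff_of_false (fun h => hxy (node.inj h).2.1) fun h => h.2 y hy (Or.inl ⟨rfl, Or.inr hx⟩)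
    have hwlr : w ~ labels l ++ labels r := by
      refine (perm_cons x).mp ((perm_append_singleton x w).symm.trans (hwt.trans ?_))
      simp [labels, perm_middle]
    obtain ⟨hwl, hwr⟩ := filter_perm_labels_of_perm ht hwlr
    obtain ⟨hwnd, hxw⟩ : w.Nodup ∧ ∀ a ∈ w, a ≠ x := by simpa [nodup_append] using hw
    rw [node.injEq, ihl (hwnd.filter _) ht.2.2.1 hwl, ihr (hwnd.filter _) ht.2.2.2 hwr,
      pairwise_not_desc_node_iff ht hwlr]
    simp only [true_and, iff_self_and]
    exact fun _ a ha h => hxw a ha (eq_of_desc_root ht h)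

def postorder : BT → List ℕ
  | leaf => []
  | node l x r => postorder l ++ postorder r ++ [x]

def mirrorPostorder : BT → List ℕ
  | leaf => []
  | node l x r => mirrorPostorder r ++ mirrorPostorder l ++ [x]

theorem postorder_perm (t : BT) : postorder t ~ labels t := by
  induction t with
  | leaf => rfl
  | node l x r ihl ihr =>
    calc postorder l ++ postorder r ++ [x] ~ labels l ++ (labels r ++ [x]) := by
          rw [append_assoc]; exact ihl.append (ihr.append_right _)
      _ ~ labels l ++ x :: labels r := (perm_append_singleton x _).append_left _

theorem mirrorPostorder_perm (t : BT) : mirrorPostorder t ~ labels t := by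
  induction t with
  | leaf => rfl
  | node l x r ihl ihr =>
    calc mirrorPostorder r ++ mirrorPostorder l ++ [x] ~ labels l ++ labels r ++ [x] :=
          (perm_append_comm.trans (ihl.append ihr)).append_right _
      _ ~ labels l ++ x :: labels r := by
          rw [append_assoc]; exact (perm_append_singleton x _).append_left _

theorem pairwise_postorder {t : BT} (ht : IsBST t) :
    (postorder t).Pairwise (fun a b => ¬ Desc t b a ∧ (b < a → Desc t a b)) := by
  induction t with
  | leaf => exact Pairwise.nil
  | node l x r ihl ihr =>
    have hl := fun a (ha : a ∈ postorder l) => (postorder_perm l).subset ha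
    have hr := fun a (ha : a ∈ postorder r) => (postorder_perm r).subset ha
    simp only [postorder, pairwise_append, pairwise_singleton, mem_append, mem_singleton, true_and]
    refine ⟨⟨(ihl ht.2.2.1).imp_of_mem fun ha _ h => ?_, (ihr ht.2.2.2).imp_of_mem fun ha _ h => ?_,
      fun a ha b hb => ?_⟩, ?_⟩
    · exact ⟨(not_congr (desc_node_iff_left ht (hl _ ha))).mpr h.1,
        fun hba => Or.inr (Or.inl (h.2 hba))⟩
    · exact ⟨(not_congr (desc_node_iff_right ht (hr _ ha))).mpr h.1,
        fun hba => Or.inr (Or.inr (h.2 hba))⟩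
    · exact ⟨(not_desc_of_mem_left_of_mem_right ht (hl a ha) (hr b hb)).2, fun hba =>
        absurd ((ht.1 a (hl a ha)).trans (ht.2.1 b (hr b hb))) (lt_asymm hba)⟩
    · rintro a ha _ rfl
      rcases ha with ha | ha
      · have hax := ht.1 a (hl a ha)
        exact ⟨fun h => hax.ne (eq_of_desc_root ht h), fun hxa => absurd hxa (lt_asymm hax)⟩
      · have hxa := ht.2.1 a (hr a ha)
        exact ⟨fun h => hxa.ne' (eq_of_desc_root ht h),
          fun _ => Or.inl ⟨rfl, Or.inr (Or.inr (hr a ha))⟩⟩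

theorem pairwise_mirrorPostorder {t : BT} (ht : IsBST t) :
    (mirrorPostorder t).Pairwise (fun a b => ¬ Desc t b a ∧ (a < b → Desc t a b)) := by
  induction t with
  | leaf => exact Pairwise.nil
  | node l x r ihl ihr =>
    have hl := fun a (ha : a ∈ mirrorPostorder l) => (mirrorPostorder_perm l).subset ha
    have hr := fun a (ha : a ∈ mirrorPostorder r) => (mirrorPostorder_perm r).subset ha
    simp only [mirrorPostorder, pairwise_append, pairwise_singleton, mem_append, mem_singleton,
      true_and]
    refine ⟨⟨(ihr ht.2.2.2).imp_of_mem fun ha _ h => ?_, (ihl ht.2.2.1).imp_of_mem fun ha _ h => ?_,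
      fun a ha b hb => ?_⟩, ?_⟩
    · exact ⟨(not_congr (desc_node_iff_right ht (hr _ ha))).mpr h.1,
        fun hab => Or.inr (Or.inr (h.2 hab))⟩
    · exact ⟨(not_congr (desc_node_iff_left ht (hl _ ha))).mpr h.1,
        fun hab => Or.inr (Or.inl (h.2 hab))⟩
    · exact ⟨(not_desc_of_mem_left_of_mem_right ht (hl b hb) (hr a ha)).1, fun hab =>
        absurd ((ht.1 b (hl b hb)).trans (ht.2.1 a (hr a ha))) (lt_asymm hab)⟩
    · rintro a ha _ rfl
      rcases ha with ha | ha
      · have hxa := ht.2.1 a (hr a ha)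
        exact ⟨fun h => hxa.ne' (eq_of_desc_root ht h), fun hax => absurd hax (lt_asymm hxa)⟩
      · have hax := ht.1 a (hl a ha)
        exact ⟨fun h => hax.ne (eq_of_desc_root ht h),
          fun _ => Or.inl ⟨rfl, Or.inr (Or.inl (hl a ha))⟩⟩

end BT

theorem wordOf_nodup {n : ℕ} (σ : Equiv.Perm (Fin n)) : (wordOf σ).Nodup :=
  List.nodup_ofFn.mpr fun _ _ h => σ.injective (Fin.val_injective (Nat.succ_injective h))

theorem wordOf_perm {n : ℕ} (σ : Equiv.Perm (Fin n)) : (wordOf σ).Perm (List.range' 1 n) := by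
  have hrange : List.range' 1 n = List.ofFn fun i : Fin n => (i : ℕ) + 1 := by
    apply List.ext_getElem <;> simp [add_comm]
  rw [hrange]
  exact σ.ofFn_comp_perm fun i => (i : ℕ) + 1

theorem pairwise_wordOf_iff {n : ℕ} {R : ℕ → ℕ → Prop} (σ : Equiv.Perm (Fin n)) :
    (wordOf σ).Pairwise R ↔ ∀ p q : Fin n, σ⁻¹ p < σ⁻¹ q → R (p + 1) (q + 1) := by
  rw [wordOf, List.pairwise_ofFn]
  constructor
  · intro h p q hpq
    simpa using h hpq
  · intro h i j hij
    simpa using h (σ i) (σ j) (by simpa using hij)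

/-- `m` and `M` are linear extensions of `D` (read `D p q` as "`p` lies below `q`") that order
every pair not forced by `D` increasingly, resp. decreasingly. -/
theorem forall_not_rel_iff_coinvSet_between {n : ℕ} {D : Fin n → Fin n → Prop}
    {σ m M : Equiv.Perm (Fin n)}
    (hm : ∀ p q, m⁻¹ p < m⁻¹ q → ¬ D q p ∧ (q < p → D p q))
    (hM : ∀ p q, M⁻¹ p < M⁻¹ q → ¬ D q p ∧ (p < q → D p q)) :
    (∀ p q, σ⁻¹ p < σ⁻¹ q → ¬ D q p) ↔ coinvSet m ⊆ coinvSet σ ∧ coinvSet σ ⊆ coinvSet M := by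
  have hne {τ : Equiv.Perm (Fin n)} {p q : Fin n} (h : p ≠ q) : τ⁻¹ p ≠ τ⁻¹ q :=
    fun e => h (τ⁻¹.injective e)
  constructor
  · intro hσ
    refine ⟨fun ⟨p, q⟩ ⟨hpq, hm'⟩ => ⟨hpq, ?_⟩, fun ⟨p, q⟩ ⟨hpq, hσ'⟩ => ⟨hpq, ?_⟩⟩
    · refine lt_of_not_ge fun h => hσ p q (lt_of_le_of_ne h (hne hpq.ne)) ?_
      exact ((hm q p hm').2 hpq)
    · refine lt_of_not_ge fun h => hσ q p hσ' ?_
      exact (hM p q (lt_of_le_of_ne h (hne hpq.ne))).2 hpq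
  · rintro ⟨hmσ, hσM⟩ p q hσ hD
    rcases lt_or_gt_of_ne (show p ≠ q by rintro rfl; exact lt_irrefl _ hσ) with hpq | hqp
    · have hm' : m⁻¹ q < m⁻¹ p :=
        lt_of_not_ge fun h => (hm p q (lt_of_le_of_ne h (hne hpq.ne))).1 hD
      exact lt_asymm hσ (hmσ (show (p, q) ∈ coinvSet m from ⟨hpq, hm'⟩)).2
    · exact (hM p q (hσM (show (q, p) ∈ coinvSet σ from ⟨hqp, hσ⟩)).2).1 hD

theorem exists_wordOf_eq {n : ℕ} {u : List ℕ} (hu : u.Perm (List.range' 1 n)) :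
    ∃ σ : Equiv.Perm (Fin n), wordOf σ = u := by
  obtain rfl : u.length = n := by simpa using hu.length_eq
  have hmem (i : Fin u.length) : 1 ≤ u[(i : ℕ)] ∧ u[(i : ℕ)] < 1 + u.length :=
    List.mem_range'_1.mp (hu.subset (List.getElem_mem _))
  let f (i : Fin u.length) : Fin u.length := ⟨u[(i : ℕ)] - 1, by have := hmem i; omega⟩
  have hf : Function.Injective f := fun i j hij => by
    have := hmem i; have := hmem j
    have hij : u[(i : ℕ)] - 1 = u[(j : ℕ)] - 1 := congrArg Fin.val hij
    exact Fin.ext ((hu.nodup_iff.mpr List.nodup_range').getElem_inj_iff.mp (by omega))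
  refine ⟨Equiv.ofBijective f hf.bijective_of_finite, Eq.trans ?_ (List.ofFn_getElem (xs := u))⟩
  refine congrArg List.ofFn (funext fun i => ?_)
  have := hmem i
  show u[(i : ℕ)] - 1 + 1 = u[(i : ℕ)]
  omega

theorem isLinExt_iff_pairwise {n : ℕ} {t : BT} (σ : Equiv.Perm (Fin n))
    (hlabels : (BT.labels t).Perm (List.range' 1 n)) :
    IsLinExt t σ ↔ (wordOf σ).Pairwise (fun a b => ¬ BT.Desc t b a) := by
  refine (wordOf_nodup σ).forall_idxOf_lt_iff_pairwise fun a b h => ?_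
  have hmem := fun c (hc : c ∈ BT.labels t) => (wordOf_perm σ).mem_iff.mpr (hlabels.subset hc)
  exact ⟨hmem a (BT.mem_labels_of_desc h).1, hmem b (BT.mem_labels_of_desc h).2⟩

/-- For a binary tree with its standard binary search tree labelling
`t` on `{1,…,n}`, the permutations whose BST insertion has the shape of `t` are exactly
the linear extensions of `t` viewed as a poset, and this set is an interval of the
right weak order. -/
theorem sylvester_class_is_linear_extensions (n : ℕ) (t : BT)
    (hbst : BT.IsBST t) (hlabels : (BT.labels t).Perm (List.range' 1 n)) :
    (∀ σ : Equiv.Perm (Fin n),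
        BT.shape (BT.abr (wordOf σ)) = BT.shape t ↔ IsLinExt t σ) ∧
    (∃ mσ Mσ : Equiv.Perm (Fin n), ∀ σ : Equiv.Perm (Fin n),
        BT.shape (BT.abr (wordOf σ)) = BT.shape t ↔
          (coinvSet mσ ⊆ coinvSet σ ∧ coinvSet σ ⊆ coinvSet Mσ)) := by
  have hclass (σ : Equiv.Perm (Fin n)) :
      BT.shape (BT.abr (wordOf σ)) = BT.shape t ↔ IsLinExt t σ := by
    have hw := (wordOf_perm σ).trans hlabels.symm
    rw [BT.shape_abr_eq_iff (wordOf_nodup σ) hbst hw,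
      BT.abr_eq_iff_pairwise (wordOf_nodup σ) hbst hw, isLinExt_iff_pairwise σ hlabels]
  refine ⟨hclass, ?_⟩
  obtain ⟨mσ, hmσ⟩ := exists_wordOf_eq ((BT.postorder_perm t).trans hlabels)
  obtain ⟨Mσ, hMσ⟩ := exists_wordOf_eq ((BT.mirrorPostorder_perm t).trans hlabels)
  have hmin := (pairwise_wordOf_iff mσ).mp (hmσ ▸ BT.pairwise_postorder hbst)
  have hmax := (pairwise_wordOf_iff Mσ).mp (hMσ ▸ BT.pairwise_mirrorPostorder hbst)
  refine ⟨mσ, Mσ, fun σ => (hclass σ).trans ?_⟩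
  rw [isLinExt_iff_pairwise σ hlabels, pairwise_wordOf_iff]
  exact forall_not_rel_iff_coinvSet_between
    (fun p q h => (hmin p q h).imp_right (· ∘ Nat.succ_lt_succ))
    (fun p q h => (hmax p q h).imp_right (· ∘ Nat.succ_lt_succ))
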